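/- arXiv:1507.02076 — 5 statements merged into one kernel-verified Lean document; each statement's English description precedes it below -/
import Mathlib

section
/- Under the stated assumptions, the approximation u_{k*} selected by the parameter choice rule satisfies the error bound ‖u† − u_{k*}‖_{L²(μ)} ≤ ‖u† − u_{k_opt}‖_{L²(μ)} + 2‖D u† − D u_{k_opt}‖_E + 2ε. -/
open MeasureTheory RealInnerProductSpace

/-- **Theorem (main error bound).** Under conditions (a)–(d), the approximation `u k⋆`
selected by the parameter choice rule satisfies
`‖u† − u_{k⋆}‖ ≤ ‖u† − u_{k_opt}‖ + 2‖D u† − D u_{k_opt}‖ + 2ε`. -/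
theorem parameter_choice_error_bound
    {Γ : Type*} [MeasurableSpace Γ] {μ : Measure Γ}
    {E : Type*} [NormedAddCommGroup E] [InnerProductSpace ℝ E] [FiniteDimensional ℝ E]
    (D : Lp ℝ 2 μ →ₗ[ℝ] E)
    (V : Submodule ℝ (Lp ℝ 2 μ)) [FiniteDimensional ℝ V]
    (hDV : ∀ g ∈ V, ∀ gbar ∈ V, ⟪D g, D gbar⟫ = ⟪g, gbar⟫)
    (udag f : Lp ℝ 2 μ) (ε : ℝ) (hε : 0 < ε)
    (hnoise : ‖D udag - D f‖ ≤ ε)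
    (N : ℕ) (u : Fin N → Lp ℝ 2 μ) (huV : ∀ k, u k ∈ V)
    (hne : ∃ k l, u k ≠ u l)
    (A : Set (Lp ℝ 2 μ))
    (hA : A = {a | ∃ k l, u k ≠ u l ∧ a = ‖u k - u l‖⁻¹ • (u k - u l)})
    (h : Fin N → Lp ℝ 2 μ → ℝ)
    (hh : ∀ k a, h k a = ⟪u k, a⟫ - ⟪D f, D a⟫)
    (H : Fin N → ℝ)
    (hH : ∀ k, IsGreatest ((fun a => |h k a|) '' A) (H k))
    (kopt kstar : Fin N)
    (hkopt : ∀ k, ‖udag - u kopt‖ ≤ ‖udag - u k‖)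
    (hkstar : ∀ k, H kstar ≤ H k) :
    ‖udag - u kstar‖ ≤ ‖udag - u kopt‖ + 2 * ‖D udag - D (u kopt)‖ + 2 * ε := by

  by_cases hcase : u kstar = u kopt
  · rw [hcase]
    have h1 : 0 ≤ ‖D udag - D (u kopt)‖ := norm_nonneg _
    linarith
  have key : ∀ a ∈ A, |h kopt a| ≤ ‖D udag - D (u kopt)‖ + ε := by
    intro a ha
    rw [hA] at ha
    obtain ⟨k, l, hkl, rfl⟩ := ha
    set w := u k - u l with hw
    have hwne : w ≠ 0 := sub_ne_zero.mpr hkl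
    have hwpos : (0:ℝ) < ‖w‖ := norm_pos_iff.mpr hwne
    have hwV : w ∈ V := sub_mem (huV k) (huV l)
    have haV : (‖w‖⁻¹ • w) ∈ V := Submodule.smul_mem _ _ hwV
    have hna : ‖‖w‖⁻¹ • w‖ = 1 := by
      rw [norm_smul, norm_inv, norm_norm]
      field_simp
    have hDa : ‖D (‖w‖⁻¹ • w)‖ = 1 := by
      have h2 : ⟪D (‖w‖⁻¹ • w), D (‖w‖⁻¹ • w)⟫ = ⟪(‖w‖⁻¹ • w), (‖w‖⁻¹ • w)⟫ :=
        hDV _ haV _ haV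
      rw [real_inner_self_eq_norm_sq, real_inner_self_eq_norm_sq, hna] at h2
      nlinarith [norm_nonneg (D (‖w‖⁻¹ • w))]
    have heq : h kopt (‖w‖⁻¹ • w) = ⟪D (u kopt) - D f, D (‖w‖⁻¹ • w)⟫ := by
      rw [hh, inner_sub_left, hDV _ (huV kopt) _ haV]
    calc |h kopt (‖w‖⁻¹ • w)| ≤ ‖D (u kopt) - D f‖ * ‖D (‖w‖⁻¹ • w)‖ := by
          rw [heq]; exact abs_real_inner_le_norm _ _
      _ = ‖D (u kopt) - D f‖ := by rw [hDa, mul_one]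
      _ ≤ ‖D (u kopt) - D udag‖ + ‖D udag - D f‖ :=
          norm_sub_le_norm_sub_add_norm_sub _ _ _
      _ ≤ ‖D udag - D (u kopt)‖ + ε := by
          rw [norm_sub_rev]; linarith
  set w := u kstar - u kopt with hw
  have hwne : w ≠ 0 := sub_ne_zero.mpr hcase
  have hwpos : (0:ℝ) < ‖w‖ := norm_pos_iff.mpr hwne
  have haA : (‖w‖⁻¹ • w) ∈ A := by
    rw [hA]; exact ⟨kstar, kopt, hcase, rfl⟩
  have hHk : ∀ k, |h k (‖w‖⁻¹ • w)| ≤ H k := fun k => (hH k).2 ⟨_, haA, rfl⟩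
  have hinner : ⟪w, ‖w‖⁻¹ • w⟫ = ‖w‖ := by
    rw [real_inner_smul_right, real_inner_self_eq_norm_sq]
    field_simp
  have hdiff : h kstar (‖w‖⁻¹ • w) - h kopt (‖w‖⁻¹ • w) = ‖w‖ := by
    rw [hh, hh]
    have hsub : ⟪u kstar, ‖w‖⁻¹ • w⟫ - ⟪u kopt, ‖w‖⁻¹ • w⟫ = ⟪w, ‖w‖⁻¹ • w⟫ :=
      (inner_sub_left _ _ _).symm
    linarith [hinner]
  obtain ⟨a0, ha0A, ha0⟩ := (hH kopt).1
  have hHkopt : H kopt ≤ ‖D udag - D (u kopt)‖ + ε := by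
    rw [← ha0]; exact key a0 ha0A
  have hwbound : ‖w‖ ≤ 2 * (‖D udag - D (u kopt)‖ + ε) := by
    have h1 := abs_le.mp (hHk kstar)
    have h2 := abs_le.mp (hHk kopt)
    have h3 := hkstar kopt
    linarith [hdiff, h1.1, h1.2, h2.1, h2.2]
  calc ‖udag - u kstar‖ ≤ ‖udag - u kopt‖ + ‖u kopt - u kstar‖ :=
        norm_sub_le_norm_sub_add_norm_sub _ _ _
    _ = ‖udag - u kopt‖ + ‖w‖ := by rw [norm_sub_rev (u kopt)]
    _ ≤ _ := by linarith
end

section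
/- The selected approximation u_{k*} satisfies ‖u_{k*} − u_{k_opt}‖_{L²(μ)} ≤ H_{k*} + H_{k_opt} ≤ 2 H_{k_opt}; in particular the distance of the chosen candidate to the optimal candidate is bounded by twice the surrogate quantity H_{k_opt}. -/
open MeasureTheory RealInnerProductSpace

/-- The selected approximation `u k⋆` satisfies
`‖u_{k⋆} − u_{k_opt}‖ ≤ H_{k⋆} + H_{k_opt} ≤ 2 H_{k_opt}`. -/
theorem dist_selected_to_optimal_le_two_H
    {Γ : Type*} [MeasurableSpace Γ] {μ : Measure Γ}
    {E : Type*} [NormedAddCommGroup E] [InnerProductSpace ℝ E] [FiniteDimensional ℝ E]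
    (D : Lp ℝ 2 μ →ₗ[ℝ] E)
    (V : Submodule ℝ (Lp ℝ 2 μ)) [FiniteDimensional ℝ V]
    (hDV : ∀ g ∈ V, ∀ gbar ∈ V, ⟪D g, D gbar⟫ = ⟪g, gbar⟫)
    (udag f : Lp ℝ 2 μ)
    (N : ℕ) (u : Fin N → Lp ℝ 2 μ) (huV : ∀ k, u k ∈ V)
    (hne : ∃ k l, u k ≠ u l)
    (A : Set (Lp ℝ 2 μ))
    (hA : A = {a | ∃ k l, u k ≠ u l ∧ a = ‖u k - u l‖⁻¹ • (u k - u l)})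
    (h : Fin N → Lp ℝ 2 μ → ℝ)
    (hh : ∀ k a, h k a = ⟪u k, a⟫ - ⟪D f, D a⟫)
    (H : Fin N → ℝ)
    (hH : ∀ k, IsGreatest ((fun a => |h k a|) '' A) (H k))
    (kopt kstar : Fin N)
    (hkopt : ∀ k, ‖udag - u kopt‖ ≤ ‖udag - u k‖)
    (hkstar : ∀ k, H kstar ≤ H k) :
    ‖u kstar - u kopt‖ ≤ H kstar + H kopt ∧ H kstar + H kopt ≤ 2 * H kopt := by
  have hbound : ∀ a ∈ A, ∀ k, |h k a| ≤ H k := fun a ha k => (hH k).2 ⟨a, ha, rfl⟩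
  have hHnn : ∀ k, 0 ≤ H k := by
    intro k
    obtain ⟨i, j, hij⟩ := hne
    have ha : ‖u i - u j‖⁻¹ • (u i - u j) ∈ A := by
      rw [hA]; exact ⟨i, j, hij, rfl⟩
    exact le_trans (abs_nonneg _) (hbound _ ha k)
  have hmain : ‖u kstar - u kopt‖ ≤ H kstar + H kopt := by
    by_cases heq : u kstar = u kopt
    · rw [heq, sub_self, norm_zero]
      exact add_nonneg (hHnn _) (hHnn _)
    · set d := u kstar - u kopt with hd
      set a := ‖d‖⁻¹ • d with hadef
      have ha : a ∈ A := by rw [hA]; exact ⟨kstar, kopt, heq, rfl⟩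
      have hdne : ‖d‖ ≠ 0 := by
        simpa [hd, sub_eq_zero] using heq
      have hinner : ⟪d, a⟫ = ‖d‖ := by
        rw [hadef, real_inner_smul_right, real_inner_self_eq_norm_sq]
        field_simp
      have : ‖d‖ = h kstar a - h kopt a := by
        rw [hh, hh, ← hinner, hd, inner_sub_left]; ring
      rw [hd] at this ⊢
      rw [this]
      calc h kstar a - h kopt a ≤ |h kstar a| + |h kopt a| := by
            have := abs_sub (h kstar a) (h kopt a)
            exact le_trans (le_abs_self _) (abs_sub _ _)
        _ ≤ H kstar + H kopt := add_le_add (hbound _ ha _) (hbound _ ha _)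
  exact ⟨hmain, by linarith [hkstar kopt]⟩
end

section
/- The surrogate quantity of the optimal candidate is controlled by the noise level and the discrete residual of the optimal candidate: H_{k_opt} ≤ ε + ‖D u† − D u_{k_opt}‖_E. -/
open MeasureTheory RealInnerProductSpace

/-- The surrogate quantity of the optimal candidate is controlled by the noise level
and the discrete residual of the optimal candidate:
`H_{k_opt} ≤ ε + ‖D u† − D u_{k_opt}‖`. -/
theorem H_opt_le_noise_add_discrete_residual
    {Γ : Type*} [MeasurableSpace Γ] {μ : Measure Γ}
    {E : Type*} [NormedAddCommGroup E] [InnerProductSpace ℝ E] [FiniteDimensional ℝ E]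
    (D : Lp ℝ 2 μ →ₗ[ℝ] E)
    (V : Submodule ℝ (Lp ℝ 2 μ)) [FiniteDimensional ℝ V]
    (hDV : ∀ g ∈ V, ∀ gbar ∈ V, ⟪D g, D gbar⟫ = ⟪g, gbar⟫)
    (udag f : Lp ℝ 2 μ) (ε : ℝ) (hε : 0 < ε)
    (hnoise : ‖D udag - D f‖ ≤ ε)
    (N : ℕ) (u : Fin N → Lp ℝ 2 μ) (huV : ∀ k, u k ∈ V)
    (hne : ∃ k l, u k ≠ u l)
    (A : Set (Lp ℝ 2 μ))
    (hA : A = {a | ∃ k l, u k ≠ u l ∧ a = ‖u k - u l‖⁻¹ • (u k - u l)})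
    (h : Fin N → Lp ℝ 2 μ → ℝ)
    (hh : ∀ k a, h k a = ⟪u k, a⟫ - ⟪D f, D a⟫)
    (H : Fin N → ℝ)
    (hH : ∀ k, IsGreatest ((fun a => |h k a|) '' A) (H k))
    (kopt : Fin N)
    (hkopt : ∀ k, ‖udag - u kopt‖ ≤ ‖udag - u k‖) :
    H kopt ≤ ε + ‖D udag - D (u kopt)‖ := by

  obtain ⟨hmem, -⟩ := hH kopt
  obtain ⟨a, haA, hval⟩ := hmem
  obtain ⟨k, l, hkl, rfl⟩ := hA ▸ haA
  set v : Lp ℝ 2 μ := u k - u l with hv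
  have hvne : v ≠ 0 := sub_ne_zero.mpr hkl
  set a : Lp ℝ 2 μ := ‖v‖⁻¹ • v with ha
  have hanorm : ‖a‖ = 1 := by
    rw [ha, norm_smul, norm_inv, norm_norm, inv_mul_cancel₀ (norm_ne_zero_iff.mpr hvne)]
  have haV : a ∈ V := V.smul_mem _ (V.sub_mem (huV k) (huV l))
  have hDa : ‖D a‖ = 1 := by
    have h2 : ‖D a‖ ^ 2 = ‖a‖ ^ 2 := by
      rw [← real_inner_self_eq_norm_sq, ← real_inner_self_eq_norm_sq,
        hDV a haV a haV]
    rw [hanorm] at h2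
    nlinarith [norm_nonneg (D a)]
  have hhval : h kopt a = ⟪D (u kopt) - D f, D a⟫ := by
    rw [hh, inner_sub_left, hDV (u kopt) (huV kopt) a haV]
  have hbound : |h kopt a| ≤ ‖D (u kopt) - D f‖ := by
    calc |h kopt a| = |⟪D (u kopt) - D f, D a⟫| := by rw [hhval]
    _ ≤ ‖D (u kopt) - D f‖ * ‖D a‖ := abs_real_inner_le_norm _ _
    _ = ‖D (u kopt) - D f‖ := by rw [hDa, mul_one]
  have htri : ‖D (u kopt) - D f‖ ≤ ‖D udag - D (u kopt)‖ + ‖D udag - D f‖ := by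
    calc ‖D (u kopt) - D f‖ = ‖(D (u kopt) - D udag) + (D udag - D f)‖ := by rw [sub_add_sub_cancel]
    _ ≤ ‖D (u kopt) - D udag‖ + ‖D udag - D f‖ := norm_add_le _ _
    _ = ‖D udag - D (u kopt)‖ + ‖D udag - D f‖ := by rw [norm_sub_rev]
  rw [← hval]
  linarith
end

section
/- For every a ∈ A_N, the surrogate value of the optimal candidate satisfies h_{k_opt}(a) ≤ ε + ‖u† − u_{k_opt}‖_{L²(μ)} + c(a) · ‖u† − u_best‖_∞, where c(a) = √(μ(Γ)) + Σ_{i=1}^M w_i |a(x_i)|, and moreover c(a) ≤ 2√(μ(Γ)); consequently H_{k_opt} ≤ ε + ‖u† − u_{k_opt}‖_{L²(μ)} + 2√(μ(Γ)) ‖u† − u_best‖_∞. -/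
/-!
Write `h_k(a) = ∫ u_k a - ∑ wᵢ f(xᵢ) a(xᵢ)`. As the quadrature is exact on `V` and `a, u_best ∈ V`,
`∫ u_best a = ∑ wᵢ u_best(xᵢ) a(xᵢ)`, hence
`h_k(a) = -∫ (u† - u_k) a + ∫ (u† - u_best) a`
  `- ∑ wᵢ (u† - u_best)(xᵢ) a(xᵢ) + ∑ wᵢ (u† - f)(xᵢ) a(xᵢ)`.
Every `a ∈ A_N` has L² norm at most `1` (it is `0` if `u_k - u_l` vanishes `μ`-a.e.), and so has
discrete norm at most `1`. Cauchy–Schwarz then bounds the four terms in absolute value by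
`‖u† - u_k‖_{L²}`, `√μ(Γ) ‖u† - u_best‖_∞`, `(∑ wᵢ |a(xᵢ)|) ‖u† - u_best‖_∞` and `ε`; since this
bounds `|h_k(a)|`, it bounds `H_k` as well. Cauchy–Schwarz against the constant `1` gives
`∑ wᵢ |a(xᵢ)| ≤ √μ(Γ)`.
-/

open MeasureTheory

theorem Real.abs_sum_weight_mul_le_sqrt_mul_sqrt {ι : Type*} (s : Finset ι) {w : ι → ℝ}
    (hw : ∀ i ∈ s, 0 ≤ w i) (p q : ι → ℝ) :
    |∑ i ∈ s, w i * (p i * q i)| ≤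
      √(∑ i ∈ s, w i * p i ^ 2) * √(∑ i ∈ s, w i * q i ^ 2) := by
  rw [← Real.sqrt_mul (Finset.sum_nonneg fun i hi => mul_nonneg (hw i hi) (sq_nonneg _))]
  refine Real.abs_le_sqrt (Finset.sum_sq_le_sum_mul_sum_of_sq_le_mul s
    (fun i hi => mul_nonneg (hw i hi) (sq_nonneg _))
    (fun i hi => mul_nonneg (hw i hi) (sq_nonneg _)) fun i _ => le_of_eq ?_)
  ring

theorem abs_sum_weight_mul_le_of_abs_le {ι : Type*} (s : Finset ι) {w p : ι → ℝ} {C : ℝ}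
    (hw : ∀ i ∈ s, 0 ≤ w i) (hp : ∀ i ∈ s, |p i| ≤ C) (q : ι → ℝ) :
    |∑ i ∈ s, w i * (p i * q i)| ≤ C * ∑ i ∈ s, w i * |q i| := by
  rw [Finset.mul_sum]
  refine (Finset.abs_sum_le_sum_abs _ _).trans (Finset.sum_le_sum fun i hi => ?_)
  rw [abs_mul, abs_mul, abs_of_nonneg (hw i hi), mul_left_comm]
  exact mul_le_mul_of_nonneg_right (hp i hi) (mul_nonneg (hw i hi) (abs_nonneg _))

theorem abs_integral_mul_le_sqrt_mul_sqrt {α : Type*} [MeasurableSpace α] {μ : Measure α}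
    {f g : α → ℝ} (hf : MemLp f 2 μ) (hg : MemLp g 2 μ) :
    |∫ a, f a * g a ∂μ| ≤ √(∫ a, f a ^ 2 ∂μ) * √(∫ a, g a ^ 2 ∂μ) := by
  have hpq : (2 : ℝ).HolderConjugate 2 := .two_two
  have holder := integral_mul_norm_le_Lp_mul_Lq (μ := μ) (f := f) (g := g) hpq
    (by rwa [ENNReal.ofReal_ofNat]) (by rwa [ENNReal.ofReal_ofNat])
  simp only [Real.rpow_two, Real.norm_eq_abs, sq_abs, ← Real.sqrt_eq_rpow] at holder
  calc |∫ a, f a * g a ∂μ| ≤ ∫ a, |f a * g a| ∂μ := abs_integral_le_integral_abs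
    _ = ∫ a, |f a| * |g a| ∂μ := by simp only [abs_mul]
    _ ≤ _ := holder

theorem sqrt_integral_sq_inv_sqrt_mul_le_one {α : Type*} [MeasurableSpace α] (μ : Measure α)
    (f : α → ℝ) : √(∫ a, ((√(∫ a, f a ^ 2 ∂μ))⁻¹ * f a) ^ 2 ∂μ) ≤ 1 := by
  simp_rw [mul_pow, integral_const_mul]
  rw [Real.sqrt_mul (sq_nonneg _), Real.sqrt_sq (inv_nonneg.mpr (Real.sqrt_nonneg _))]
  exact inv_mul_le_one_of_le₀ le_rfl (Real.sqrt_nonneg _)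

section Quadrature

variable {Γ : Type*} [TopologicalSpace Γ] [MeasurableSpace Γ] {μ : Measure Γ}
  {ι : Type*} [Fintype ι] {x : ι → Γ} {w : ι → ℝ} {V : Submodule ℝ C(Γ, ℝ)}

variable (μ x w V) in
def QuadratureExactOn : Prop :=
  ∀ g ∈ V, ∀ gbar ∈ V, ∫ t, g t * gbar t ∂μ = ∑ i, w i * (g (x i) * gbar (x i))

theorem integral_sq_eq_sum_of_mem (hquad : QuadratureExactOn μ x w V) {a : C(Γ, ℝ)} (ha : a ∈ V) :
    ∫ t, a t ^ 2 ∂μ = ∑ i, w i * a (x i) ^ 2 := by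
  simpa only [sq] using hquad a ha a ha

theorem sum_weight_mul_abs_le_sqrt_measure (hw : ∀ i, 0 ≤ w i)
    (hsum : ∑ i, w i = (μ Set.univ).toReal)
    (hquad : QuadratureExactOn μ x w V)
    {a : C(Γ, ℝ)} (ha : a ∈ V) (ha1 : √(∫ t, a t ^ 2 ∂μ) ≤ 1) :
    ∑ i, w i * |a (x i)| ≤ √(μ Set.univ).toReal := by
  have hcs := Real.abs_sum_weight_mul_le_sqrt_mul_sqrt Finset.univ (fun i _ => hw i)
    (fun _ => 1) (fun i => |a (x i)|)
  simp only [one_mul, one_pow, mul_one, sq_abs] at hcs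
  rw [hsum, ← integral_sq_eq_sum_of_mem hquad ha] at hcs
  calc ∑ i, w i * |a (x i)| ≤ √(μ Set.univ).toReal * √(∫ t, a t ^ 2 ∂μ) :=
        (le_abs_self _).trans hcs
    _ ≤ √(μ Set.univ).toReal := mul_le_of_le_one_right (Real.sqrt_nonneg _) ha1

variable [CompactSpace Γ] [OpensMeasurableSpace Γ] [IsFiniteMeasure μ]

namespace ContinuousMap

theorem memLp_of_compactSpace {E : Type*} [NormedAddCommGroup E] (g : C(Γ, E)) (p : ENNReal) :
    MemLp g p μ :=
  g.continuous.memLp_of_hasCompactSupport (.of_compactSpace g)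

theorem integrable_of_compactSpace {E : Type*} [NormedAddCommGroup E] (g : C(Γ, E)) :
    Integrable g μ :=
  g.continuous.integrable_of_hasCompactSupport (.of_compactSpace g)

theorem sqrt_integral_sq_le_sqrt_measure_mul_norm (g : C(Γ, ℝ)) :
    √(∫ t, g t ^ 2 ∂μ) ≤ √(μ Set.univ).toReal * ‖g‖ := by
  have hle : ∫ t, g t ^ 2 ∂μ ≤ ∫ _, ‖g‖ ^ 2 ∂μ :=
    integral_mono (g ^ 2).integrable_of_compactSpace (integrable_const _) fun t => by
      simpa only [Real.norm_eq_abs, sq_abs] using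
        pow_le_pow_left₀ (norm_nonneg _) (g.norm_coe_le_norm t) 2
  rw [integral_const, smul_eq_mul, measureReal_def] at hle
  calc √(∫ t, g t ^ 2 ∂μ) ≤ √((μ Set.univ).toReal * ‖g‖ ^ 2) := Real.sqrt_le_sqrt hle
    _ = √(μ Set.univ).toReal * ‖g‖ := by
      rw [Real.sqrt_mul ENNReal.toReal_nonneg, Real.sqrt_sq (norm_nonneg g)]

theorem integral_sub_mul (g₁ g₂ a : C(Γ, ℝ)) :
    ∫ t, (g₁ - g₂) t * a t ∂μ = ∫ t, g₁ t * a t ∂μ - ∫ t, g₂ t * a t ∂μ := by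
  simp only [sub_apply, sub_mul]
  exact integral_sub (g₁ * a).integrable_of_compactSpace (g₂ * a).integrable_of_compactSpace

end ContinuousMap

theorem integral_mul_sub_sum_eq (hquad : QuadratureExactOn μ x w V)
    {a v : C(Γ, ℝ)} (ha : a ∈ V) (hv : v ∈ V) (udag f u : C(Γ, ℝ)) :
    ∫ t, u t * a t ∂μ - ∑ i, w i * (f (x i) * a (x i)) =
      -∫ t, (udag - u) t * a t ∂μ + ∫ t, (udag - v) t * a t ∂μ
        - ∑ i, w i * ((udag - v) (x i) * a (x i))
        + ∑ i, w i * ((udag (x i) - f (x i)) * a (x i)) := by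
  rw [ContinuousMap.integral_sub_mul, ContinuousMap.integral_sub_mul, hquad v hv a ha]
  simp only [ContinuousMap.sub_apply, sub_mul, mul_sub, Finset.sum_sub_distrib]
  ring

theorem abs_integral_mul_sub_sum_le (hw : ∀ i, 0 ≤ w i)
    (hquad : QuadratureExactOn μ x w V)
    {a v : C(Γ, ℝ)} (ha : a ∈ V) (ha1 : √(∫ t, a t ^ 2 ∂μ) ≤ 1) (hv : v ∈ V)
    (udag f u : C(Γ, ℝ)) :
    |∫ t, u t * a t ∂μ - ∑ i, w i * (f (x i) * a (x i))| ≤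
      √(∑ i, w i * (udag (x i) - f (x i)) ^ 2) + √(∫ t, (udag - u) t ^ 2 ∂μ) +
        (√(μ Set.univ).toReal + ∑ i, w i * |a (x i)|) * ‖udag - v‖ := by
  have h_approx : |∫ t, (udag - u) t * a t ∂μ| ≤ √(∫ t, (udag - u) t ^ 2 ∂μ) :=
    (abs_integral_mul_le_sqrt_mul_sqrt (ContinuousMap.memLp_of_compactSpace _ 2)
      (a.memLp_of_compactSpace 2)).trans (mul_le_of_le_one_right (Real.sqrt_nonneg _) ha1)
  have h_best : |∫ t, (udag - v) t * a t ∂μ| ≤ √(μ Set.univ).toReal * ‖udag - v‖ :=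
    (abs_integral_mul_le_sqrt_mul_sqrt (ContinuousMap.memLp_of_compactSpace _ 2)
      (a.memLp_of_compactSpace 2)).trans <|
        (mul_le_of_le_one_right (Real.sqrt_nonneg _) ha1).trans
          (udag - v).sqrt_integral_sq_le_sqrt_measure_mul_norm
  have h_nodes :
      |∑ i, w i * ((udag - v) (x i) * a (x i))| ≤ ‖udag - v‖ * ∑ i, w i * |a (x i)| :=
    abs_sum_weight_mul_le_of_abs_le _ (fun i _ => hw i)
      (fun i _ => (udag - v).norm_coe_le_norm (x i)) _
  have h_noise : |∑ i, w i * ((udag (x i) - f (x i)) * a (x i))| ≤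
      √(∑ i, w i * (udag (x i) - f (x i)) ^ 2) :=
    (Real.abs_sum_weight_mul_le_sqrt_mul_sqrt _ (fun i _ => hw i) _ _).trans <| by
      rw [← integral_sq_eq_sum_of_mem hquad ha]
      exact mul_le_of_le_one_right (Real.sqrt_nonneg _) ha1
  rw [integral_mul_sub_sum_eq hquad ha hv udag f u, abs_le]
  rw [abs_le] at h_approx h_best h_nodes h_noise
  constructor <;> linarith [h_approx.1, h_approx.2, h_best.1, h_best.2, h_nodes.1, h_nodes.2,
    h_noise.1, h_noise.2]

end Quadrature

theorem h_opt_bound_via_best_uniform_approximation_general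
    {Γ : Type*} [TopologicalSpace Γ] [CompactSpace Γ] [MeasurableSpace Γ] [BorelSpace Γ]
    (μ : Measure Γ) [IsFiniteMeasure μ]
    (M : ℕ) (x : Fin M → Γ) (w : Fin M → ℝ) (hw : ∀ i, 0 < w i)
    (hsum : ∑ i, w i = (μ Set.univ).toReal)
    (V : Submodule ℝ C(Γ, ℝ))
    (hquad : ∀ g ∈ V, ∀ gbar ∈ V,
      ∫ t, g t * gbar t ∂μ = ∑ i, w i * (g (x i) * gbar (x i)))
    (L2norm : C(Γ, ℝ) → ℝ)
    (hL2 : ∀ g : C(Γ, ℝ), L2norm g = Real.sqrt (∫ t, (g t) ^ 2 ∂μ))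
    (udag f : C(Γ, ℝ)) (ε : ℝ)
    (hnoise : Real.sqrt (∑ i, w i * (udag (x i) - f (x i)) ^ 2) ≤ ε)
    (N : ℕ) (u : Fin N → C(Γ, ℝ)) (huV : ∀ k, u k ∈ V)
    (A : Set C(Γ, ℝ))
    (hA : A = {a | ∃ k l, u k ≠ u l ∧ a = (L2norm (u k - u l))⁻¹ • (u k - u l)})
    (h : Fin N → C(Γ, ℝ) → ℝ)
    (hh : ∀ k a, h k a = (∫ t, u k t * a t ∂μ) - ∑ i, w i * (f (x i) * a (x i)))
    (H : Fin N → ℝ)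
    (hH : ∀ k, IsGreatest ((fun a => |h k a|) '' A) (H k))
    (kopt : Fin N)
    (ubest : C(Γ, ℝ)) (hubestV : ubest ∈ V) :
    (∀ a ∈ A,
      h kopt a ≤ ε + L2norm (udag - u kopt) +
        (Real.sqrt (μ Set.univ).toReal + ∑ i, w i * |a (x i)|) * ‖udag - ubest‖ ∧
      Real.sqrt (μ Set.univ).toReal + ∑ i, w i * |a (x i)| ≤
        2 * Real.sqrt (μ Set.univ).toReal) ∧
    H kopt ≤ ε + L2norm (udag - u kopt) +
      2 * Real.sqrt (μ Set.univ).toReal * ‖udag - ubest‖ := by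
  have hw₀ : ∀ i, 0 ≤ w i := fun i => (hw i).le
  have key : ∀ a ∈ A,
      |h kopt a| ≤ ε + L2norm (udag - u kopt) +
        (√(μ Set.univ).toReal + ∑ i, w i * |a (x i)|) * ‖udag - ubest‖ ∧
      √(μ Set.univ).toReal + ∑ i, w i * |a (x i)| ≤ 2 * √(μ Set.univ).toReal := by
    intro a ha
    rw [hA] at ha
    obtain ⟨k, l, -, rfl⟩ := ha
    have haV := V.smul_mem (L2norm (u k - u l))⁻¹ (V.sub_mem (huV k) (huV l))
    have ha1 : √(∫ t, (((L2norm (u k - u l))⁻¹ • (u k - u l)) t) ^ 2 ∂μ) ≤ 1 := by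
      rw [hL2]
      simpa only [ContinuousMap.smul_apply, smul_eq_mul] using
        sqrt_integral_sq_inv_sqrt_mul_le_one μ ⇑(u k - u l)
    rw [hh, hL2 (udag - u kopt)]
    refine ⟨(abs_integral_mul_sub_sum_le hw₀ hquad haV ha1 hubestV udag f (u kopt)).trans ?_, ?_⟩
    · gcongr
    · linarith [sum_weight_mul_abs_le_sqrt_measure hw₀ hsum hquad haV ha1]
  refine ⟨fun a ha => ⟨(le_abs_self _).trans (key a ha).1, (key a ha).2⟩, ?_⟩
  obtain ⟨a, ha, hHa : |h kopt a| = H kopt⟩ := (hH kopt).1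
  obtain ⟨hbound, hc⟩ := key a ha
  rw [← hHa]
  exact hbound.trans (by gcongr)

/-- For every `a ∈ A_N`, the surrogate value of the optimal candidate satisfies
`h_{k_opt}(a) ≤ ε + ‖u† − u_{k_opt}‖_{L²} + c(a) ‖u† − u_best‖_∞` with
`c(a) = √(μ Γ) + Σ_i w_i |a (x_i)|`, moreover `c(a) ≤ 2 √(μ Γ)`; consequently
`H_{k_opt} ≤ ε + ‖u† − u_{k_opt}‖_{L²} + 2 √(μ Γ) ‖u† − u_best‖_∞`. -/
theorem h_opt_bound_via_best_uniform_approximation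
    {Γ : Type*} [TopologicalSpace Γ] [CompactSpace Γ] [MeasurableSpace Γ] [BorelSpace Γ]
    (μ : Measure Γ) [IsFiniteMeasure μ]
    (M : ℕ) (x : Fin M → Γ) (w : Fin M → ℝ) (hw : ∀ i, 0 < w i)
    (hsum : ∑ i, w i = (μ Set.univ).toReal)
    (V : Submodule ℝ C(Γ, ℝ)) [FiniteDimensional ℝ V]
    (hquad : ∀ g ∈ V, ∀ gbar ∈ V,
      ∫ t, g t * gbar t ∂μ = ∑ i, w i * (g (x i) * gbar (x i)))
    (L2norm : C(Γ, ℝ) → ℝ)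
    (hL2 : ∀ g : C(Γ, ℝ), L2norm g = Real.sqrt (∫ t, (g t) ^ 2 ∂μ))
    (udag f : C(Γ, ℝ)) (ε : ℝ) (hε : 0 < ε)
    (hnoise : Real.sqrt (∑ i, w i * (udag (x i) - f (x i)) ^ 2) ≤ ε)
    (N : ℕ) (u : Fin N → C(Γ, ℝ)) (huV : ∀ k, u k ∈ V)
    (hne : ∃ k l, u k ≠ u l)
    (A : Set C(Γ, ℝ))
    (hA : A = {a | ∃ k l, u k ≠ u l ∧ a = (L2norm (u k - u l))⁻¹ • (u k - u l)})
    (h : Fin N → C(Γ, ℝ) → ℝ)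
    (hh : ∀ k a, h k a = (∫ t, u k t * a t ∂μ) - ∑ i, w i * (f (x i) * a (x i)))
    (H : Fin N → ℝ)
    (hH : ∀ k, IsGreatest ((fun a => |h k a|) '' A) (H k))
    (kopt : Fin N)
    (hkopt : ∀ k, L2norm (udag - u kopt) ≤ L2norm (udag - u k))
    (ubest : C(Γ, ℝ)) (hubestV : ubest ∈ V)
    (hubest : ∀ v ∈ V, ‖udag - ubest‖ ≤ ‖udag - v‖) :
    (∀ a ∈ A,
      h kopt a ≤ ε + L2norm (udag - u kopt) +
        (Real.sqrt (μ Set.univ).toReal + ∑ i, w i * |a (x i)|) * ‖udag - ubest‖ ∧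
      Real.sqrt (μ Set.univ).toReal + ∑ i, w i * |a (x i)| ≤
        2 * Real.sqrt (μ Set.univ).toReal) ∧
    H kopt ≤ ε + L2norm (udag - u kopt) +
      2 * Real.sqrt (μ Set.univ).toReal * ‖udag - ubest‖ :=
  h_opt_bound_via_best_uniform_approximation_general μ M x w hw hsum V hquad L2norm hL2 udag f ε
    hnoise N u huV A hA h hh H hH kopt ubest hubestV
end

section
/- In the quadrature setting, the approximation u_{k*} selected by the parameter choice rule satisfies the alternative error bound ‖u† − u_{k*}‖_{L²(μ)} ≤ 3‖u† − u_{k_opt}‖_{L²(μ)} + 4√(μ(Γ)) ‖u† − u_best‖_∞ + 2ε. -/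
/-!
Testing with the normalized difference `a` of `u_kopt` and `u_k⋆` gives
`‖u_kopt - u_k⋆‖ = h_kopt(a) - h_k⋆(a) ≤ H_kopt + H_k⋆ ≤ 2 H_kopt`. Exact quadrature on `V` turns
`h_k(a)` into `⟨D u_k - D f, D a⟩_w` with `‖D a‖_w = ‖a‖_{L²} ≤ 1`, so by Cauchy–Schwarz `H_kopt`
is at most the misfit `‖D u_kopt - D f‖_w`. Splitting the misfit through `u_best ∈ V` and `u†`
bounds it by `‖u† - u_kopt‖_{L²} + 2 √(μ Γ) ‖u† - u_best‖_∞ + ε`, since both the discrete and the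
`L²` norm are at most `√(μ Γ)` times the sup norm.
-/

open MeasureTheory
open scoped RealInnerProductSpace

section WeightedSampling

variable {X ι : Type*} [TopologicalSpace X] [Fintype ι]

/-- The paper's `D` composed with the isometry `y ↦ (√(w i) * y i)ᵢ` from `(ℝ^M, ‖·‖_w)` onto
Euclidean space. -/
noncomputable def weightedSampling (x : ι → X) (w : ι → ℝ) : C(X, ℝ) →ₗ[ℝ] EuclideanSpace ℝ ι where
  toFun g := WithLp.toLp 2 fun i => √(w i) * g (x i)
  map_add' g g' := by ext i; simp [mul_add]
  map_smul' c g := by ext i; simp [mul_left_comm]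

variable {x : ι → X} {w : ι → ℝ}

theorem inner_weightedSampling (hw : ∀ i, 0 ≤ w i) (g g' : C(X, ℝ)) :
    ⟪weightedSampling x w g, weightedSampling x w g'⟫ = ∑ i, w i * (g (x i) * g' (x i)) := by
  simp only [weightedSampling, LinearMap.coe_mk, AddHom.coe_mk, PiLp.inner_apply,
    RCLike.inner_apply, conj_trivial]
  refine Finset.sum_congr rfl fun i _ => ?_
  rw [mul_mul_mul_comm, Real.mul_self_sqrt (hw i), mul_comm (g' _)]

theorem norm_weightedSampling (hw : ∀ i, 0 ≤ w i) (g : C(X, ℝ)) :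
    ‖weightedSampling x w g‖ = √(∑ i, w i * g (x i) ^ 2) := by
  simp only [norm_eq_sqrt_real_inner, inner_weightedSampling hw, sq]

theorem norm_weightedSampling_le [CompactSpace X] (hw : ∀ i, 0 ≤ w i) (g : C(X, ℝ)) :
    ‖weightedSampling x w g‖ ≤ √(∑ i, w i) * ‖g‖ := by
  rw [norm_weightedSampling hw, ← Real.sqrt_sq (norm_nonneg g), ← Real.sqrt_mul
    (Finset.sum_nonneg fun i _ => hw i), Finset.sum_mul]
  refine Real.sqrt_le_sqrt <| Finset.sum_le_sum fun i _ => mul_le_mul_of_nonneg_left ?_ (hw i)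
  exact sq_le_sq' (abs_le.1 (g.norm_coe_le_norm _)).1 (abs_le.1 (g.norm_coe_le_norm _)).2

theorem integral_mul_sub_sum_eq_inner_weightedSampling [MeasurableSpace X] (μ : Measure X)
    (hw : ∀ i, 0 ≤ w i) {g a : C(X, ℝ)}
    (hquad : ∫ t, g t * a t ∂μ = ∑ i, w i * (g (x i) * a (x i))) (f : C(X, ℝ)) :
    (∫ t, g t * a t ∂μ) - ∑ i, w i * (f (x i) * a (x i)) =
      ⟪weightedSampling x w (g - f), weightedSampling x w a⟫ := by
  rw [hquad, inner_weightedSampling hw, ← Finset.sum_sub_distrib]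
  simp only [ContinuousMap.sub_apply, sub_mul, mul_sub]

end WeightedSampling

namespace ContinuousMap

variable {X : Type*} [TopologicalSpace X] [CompactSpace X] [MeasurableSpace X] [BorelSpace X]
  (μ : Measure X) [IsFiniteMeasure μ]

theorem real_inner_toLp_two (g g' : C(X, ℝ)) :
    ⟪toLp 2 μ ℝ g, toLp 2 μ ℝ g'⟫ = ∫ t, g t * g' t ∂μ := by
  simp only [MeasureTheory.ContinuousMap.inner_toLp, conj_trivial, mul_comm]

theorem norm_toLp_two (g : C(X, ℝ)) : ‖toLp 2 μ ℝ g‖ = √(∫ t, g t ^ 2 ∂μ) := by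
  simp only [norm_eq_sqrt_real_inner, real_inner_toLp_two, sq]

theorem norm_toLp_two_le (g : C(X, ℝ)) : ‖toLp 2 μ ℝ g‖ ≤ √(μ Set.univ).toReal * ‖g‖ := by
  have hop : ‖toLp (E := ℝ) 2 μ ℝ‖ ≤ √(μ Set.univ).toReal := by
    refine (toLp_norm_le (p := 2) (E := ℝ) (𝕜 := ℝ) μ).trans_eq ?_
    rw [Real.sqrt_eq_rpow]
    norm_num
    rfl
  exact ((toLp (E := ℝ) 2 μ ℝ).le_opNorm g).trans (mul_le_mul_of_nonneg_right hop (norm_nonneg g))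

end ContinuousMap

section Quadrature

variable {X ι : Type*} [TopologicalSpace X] [CompactSpace X] [MeasurableSpace X] [BorelSpace X]
  (μ : Measure X) [IsFiniteMeasure μ] [Fintype ι] {x : ι → X} {w : ι → ℝ}

theorem norm_weightedSampling_eq_norm_toLp (hw : ∀ i, 0 ≤ w i) {g : C(X, ℝ)}
    (hg : ∫ t, g t * g t ∂μ = ∑ i, w i * (g (x i) * g (x i))) :
    ‖weightedSampling x w g‖ = ‖ContinuousMap.toLp 2 μ ℝ g‖ := by
  rw [norm_eq_sqrt_real_inner, norm_eq_sqrt_real_inner, inner_weightedSampling hw,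
    ContinuousMap.real_inner_toLp_two, hg]

theorem norm_weightedSampling_sub_le (hw : ∀ i, 0 ≤ w i) (hsum : ∑ i, w i = (μ Set.univ).toReal)
    {v b : C(X, ℝ)}
    (hquad : ∫ t, (v - b) t * (v - b) t ∂μ = ∑ i, w i * ((v - b) (x i) * (v - b) (x i)))
    (u f : C(X, ℝ)) :
    ‖weightedSampling x w (v - f)‖ ≤ ‖ContinuousMap.toLp 2 μ ℝ (u - v)‖ +
      2 * (√(μ Set.univ).toReal * ‖u - b‖) + ‖weightedSampling x w (u - f)‖ := by
  set T := ContinuousMap.toLp (E := ℝ) 2 μ ℝ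
  set D := weightedSampling x w
  have hvb : ‖D (v - b)‖ ≤ ‖T (u - v)‖ + √(μ Set.univ).toReal * ‖u - b‖ := by
    rw [norm_weightedSampling_eq_norm_toLp μ hw hquad, ← sub_sub_sub_cancel_left b v u, map_sub]
    linarith [norm_sub_le (T (u - b)) (T (u - v)), ContinuousMap.norm_toLp_two_le μ (u - b)]
  have hbu : ‖D (b - u)‖ ≤ √(μ Set.univ).toReal * ‖u - b‖ := by
    simpa only [hsum, norm_sub_rev b u] using norm_weightedSampling_le hw (b - u)
  calc ‖D (v - f)‖ = ‖D (v - b) + D (b - u) + D (u - f)‖ := by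
        rw [← map_add, ← map_add, sub_add_sub_cancel, sub_add_sub_cancel]
    _ ≤ ‖D (v - b)‖ + ‖D (b - u)‖ + ‖D (u - f)‖ := norm_add₃_le
    _ ≤ _ := by linarith

end Quadrature

theorem norm_map_inv_norm_smul_le_one {F E 𝓕 : Type*} [AddCommGroup F] [Module ℝ F]
    [NormedAddCommGroup E] [NormedSpace ℝ E] [FunLike 𝓕 F E] [LinearMapClass 𝓕 ℝ F E]
    (T : 𝓕) (d : F) : ‖T (‖T d‖⁻¹ • d)‖ ≤ 1 := by
  rw [map_smul, norm_smul, norm_inv, norm_norm]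
  exact inv_mul_le_one_of_le₀ le_rfl (norm_nonneg _)

section Selection

variable {E : Type*} [NormedAddCommGroup E] [InnerProductSpace ℝ E]

theorem le_norm_of_mem_image_abs_inner {F : Type*} {S : F → E} {A : Set F}
    (hS : ∀ a ∈ A, ‖S a‖ ≤ 1) {y : E} {φ : F → ℝ} (hφ : ∀ a ∈ A, φ a = ⟪y, S a⟫) {c : ℝ}
    (hc : c ∈ (fun a => |φ a|) '' A) : c ≤ ‖y‖ := by
  obtain ⟨a, ha, rfl⟩ := hc
  calc |φ a| = |⟪y, S a⟫| := by rw [hφ a ha]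
    _ ≤ ‖y‖ * ‖S a‖ := abs_real_inner_le_norm y (S a)
    _ ≤ ‖y‖ := mul_le_of_le_one_right (norm_nonneg y) (hS a ha)

variable {F 𝓕 ι : Type*} [AddCommGroup F] [Module ℝ F] [FunLike 𝓕 F E] [LinearMapClass 𝓕 ℝ F E]

theorem norm_map_sub_le_add_of_isGreatest (T : 𝓕) {u : ι → F} {r : F → ℝ} {h : ι → F → ℝ}
    (hh : ∀ k a, h k a = ⟪T (u k), T a⟫ - r a) {A : Set F}
    (hA : ∀ k l, u k ≠ u l → ‖T (u k - u l)‖⁻¹ • (u k - u l) ∈ A) {H : ι → ℝ}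
    (hH : ∀ k, IsGreatest ((fun a => |h k a|) '' A) (H k)) (k l : ι) :
    ‖T (u k - u l)‖ ≤ H k + H l := by
  have hH0 : ∀ k, 0 ≤ H k := fun k => by
    obtain ⟨a, -, ha⟩ := (hH k).1
    exact ha ▸ abs_nonneg _
  set d := u k - u l
  rcases eq_or_ne (T d) 0 with hd | hd
  · simp only [hd, norm_zero]
    linarith [hH0 k, hH0 l]
  set a := ‖T d‖⁻¹ • d
  have ha : a ∈ A := hA k l fun hkl => hd (by simp [d, hkl])
  have hdiff : h k a - h l a = ‖T d‖ := by
    rw [hh, hh, sub_sub_sub_cancel_right, ← inner_sub_left, ← map_sub, map_smul,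
      real_inner_smul_right, real_inner_self_eq_norm_sq, sq, ← mul_assoc,
      inv_mul_cancel₀ (norm_ne_zero_iff.2 hd), one_mul]
  linarith [le_abs_self (h k a), neg_abs_le (h l a), (hH k).2 ⟨a, ha, rfl⟩, (hH l).2 ⟨a, ha, rfl⟩]

end Selection

theorem alternative_error_bound_via_best_uniform_approximation_general
    {Γ : Type*} [TopologicalSpace Γ] [CompactSpace Γ] [MeasurableSpace Γ] [BorelSpace Γ]
    (μ : Measure Γ) [IsFiniteMeasure μ]
    (M : ℕ) (x : Fin M → Γ) (w : Fin M → ℝ) (hw : ∀ i, 0 < w i)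
    (hsum : ∑ i, w i = (μ Set.univ).toReal)
    (V : Submodule ℝ C(Γ, ℝ))
    (hquad : ∀ g ∈ V, ∀ gbar ∈ V,
      ∫ t, g t * gbar t ∂μ = ∑ i, w i * (g (x i) * gbar (x i)))
    (L2norm : C(Γ, ℝ) → ℝ)
    (hL2 : ∀ g : C(Γ, ℝ), L2norm g = Real.sqrt (∫ t, (g t) ^ 2 ∂μ))
    (udag f : C(Γ, ℝ)) (ε : ℝ)
    (hnoise : Real.sqrt (∑ i, w i * (udag (x i) - f (x i)) ^ 2) ≤ ε)
    (N : ℕ) (u : Fin N → C(Γ, ℝ)) (huV : ∀ k, u k ∈ V)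
    (A : Set C(Γ, ℝ))
    (hA : A = {a | ∃ k l, u k ≠ u l ∧ a = (L2norm (u k - u l))⁻¹ • (u k - u l)})
    (h : Fin N → C(Γ, ℝ) → ℝ)
    (hh : ∀ k a, h k a = (∫ t, u k t * a t ∂μ) - ∑ i, w i * (f (x i) * a (x i)))
    (H : Fin N → ℝ)
    (hH : ∀ k, IsGreatest ((fun a => |h k a|) '' A) (H k))
    (kopt : Fin N)
    (kstar : Fin N)
    (hkstar : ∀ k, H kstar ≤ H k)
    (ubest : C(Γ, ℝ)) (hubestV : ubest ∈ V) :
    L2norm (udag - u kstar) ≤ 3 * L2norm (udag - u kopt) +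
      4 * Real.sqrt (μ Set.univ).toReal * ‖udag - ubest‖ + 2 * ε := by
  set T := ContinuousMap.toLp (E := ℝ) 2 μ ℝ
  set D := weightedSampling x w
  have hw0 : ∀ i, 0 ≤ w i := fun i => (hw i).le
  have hL2T : ∀ g, L2norm g = ‖T g‖ := fun g => by rw [hL2, ContinuousMap.norm_toLp_two]
  have hAV : ∀ a ∈ A, a ∈ V ∧ ‖D a‖ ≤ 1 := by
    rw [hA]
    rintro _ ⟨k, l, -, rfl⟩
    have hV := V.smul_mem (L2norm (u k - u l))⁻¹ (V.sub_mem (huV k) (huV l))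
    refine ⟨hV, ?_⟩
    rw [norm_weightedSampling_eq_norm_toLp μ hw0 (hquad _ hV _ hV), hL2T]
    exact norm_map_inv_norm_smul_le_one T _
  have hsel : ‖T (u kopt - u kstar)‖ ≤ H kopt + H kstar := norm_map_sub_le_add_of_isGreatest T
    (fun k a => by rw [hh, ← ContinuousMap.real_inner_toLp_two])
    (fun k l hkl => by rw [hA]; exact ⟨k, l, hkl, by rw [hL2T]⟩) hH kopt kstar
  have hHopt : H kopt ≤ ‖D (u kopt - f)‖ :=
    le_norm_of_mem_image_abs_inner (fun a ha => (hAV a ha).2) (fun a ha => (hh kopt a).trans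
      (integral_mul_sub_sum_eq_inner_weightedSampling μ hw0 (hquad _ (huV kopt) _ (hAV a ha).1) f))
      (hH kopt).1
  have hdiffV := V.sub_mem (huV kopt) hubestV
  have hmisfit := norm_weightedSampling_sub_le μ hw0 hsum (hquad _ hdiffV _ hdiffV) udag f
  have hnoiseD : ‖D (udag - f)‖ ≤ ε := by rwa [norm_weightedSampling hw0]
  have htri : ‖T (udag - u kstar)‖ ≤ ‖T (udag - u kopt)‖ + ‖T (u kopt - u kstar)‖ := by
    simpa only [map_sub] using norm_sub_le_norm_sub_add_norm_sub (T udag) (T (u kopt)) (T (u kstar))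
  rw [hL2T, hL2T]
  linarith [hkstar kopt]

/-- In the quadrature setting, the approximation `u k⋆` selected by the parameter
choice rule satisfies the alternative error bound
`‖u† − u_{k⋆}‖_{L²} ≤ 3‖u† − u_{k_opt}‖_{L²} + 4√(μ Γ) ‖u† − u_best‖_∞ + 2ε`. -/
theorem alternative_error_bound_via_best_uniform_approximation
    {Γ : Type*} [TopologicalSpace Γ] [CompactSpace Γ] [MeasurableSpace Γ] [BorelSpace Γ]
    (μ : Measure Γ) [IsFiniteMeasure μ]
    (M : ℕ) (x : Fin M → Γ) (w : Fin M → ℝ) (hw : ∀ i, 0 < w i)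
    (hsum : ∑ i, w i = (μ Set.univ).toReal)
    (V : Submodule ℝ C(Γ, ℝ)) [FiniteDimensional ℝ V]
    (hquad : ∀ g ∈ V, ∀ gbar ∈ V,
      ∫ t, g t * gbar t ∂μ = ∑ i, w i * (g (x i) * gbar (x i)))
    (L2norm : C(Γ, ℝ) → ℝ)
    (hL2 : ∀ g : C(Γ, ℝ), L2norm g = Real.sqrt (∫ t, (g t) ^ 2 ∂μ))
    (udag f : C(Γ, ℝ)) (ε : ℝ) (hε : 0 < ε)
    (hnoise : Real.sqrt (∑ i, w i * (udag (x i) - f (x i)) ^ 2) ≤ ε)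
    (N : ℕ) (u : Fin N → C(Γ, ℝ)) (huV : ∀ k, u k ∈ V)
    (hne : ∃ k l, u k ≠ u l)
    (A : Set C(Γ, ℝ))
    (hA : A = {a | ∃ k l, u k ≠ u l ∧ a = (L2norm (u k - u l))⁻¹ • (u k - u l)})
    (h : Fin N → C(Γ, ℝ) → ℝ)
    (hh : ∀ k a, h k a = (∫ t, u k t * a t ∂μ) - ∑ i, w i * (f (x i) * a (x i)))
    (H : Fin N → ℝ)
    (hH : ∀ k, IsGreatest ((fun a => |h k a|) '' A) (H k))
    (kopt : Fin N)
    (hkopt : ∀ k, L2norm (udag - u kopt) ≤ L2norm (udag - u k))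
    (kstar : Fin N)
    (hkstar : ∀ k, H kstar ≤ H k)
    (ubest : C(Γ, ℝ)) (hubestV : ubest ∈ V)
    (hubest : ∀ v ∈ V, ‖udag - ubest‖ ≤ ‖udag - v‖) :
    L2norm (udag - u kstar) ≤ 3 * L2norm (udag - u kopt) +
      4 * Real.sqrt (μ Set.univ).toReal * ‖udag - ubest‖ + 2 * ε :=
  alternative_error_bound_via_best_uniform_approximation_general μ M x w hw hsum V hquad L2norm hL2
    udag f ε hnoise N u huV A hA h hh H hH kopt kstar hkstar ubest hubestV
end
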